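/- In the E6 configuration of 36 projective lines, each line is orthogonal to exactly 15 other lines. -/
import Mathlib


/-- Vectors `(x; y; z) ∈ ℝ⁹` written as three blocks of three coordinates. -/
abbrev V9 : Type := Fin 3 → Fin 3 → ℝ

/-- The vector with blocks `a`, `b`, `c`. -/
def blk (a b c : Fin 3 → ℝ) : V9 := ![a, b, c]

/-- The standard inner product on `ℝ⁹`. -/
def dot9 (v w : V9) : ℝ := ∑ b, ∑ p, v b p * w b p

/-- The projective line (ray) spanned by a vector. -/
def ray9 (v : V9) : Submodule ℝ V9 := Submodule.span ℝ {v}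

/-- Orthogonality of subspaces of `ℝ⁹`. -/
def Perp9 (L M : Submodule ℝ V9) : Prop := ∀ x ∈ L, ∀ y ∈ M, dot9 x y = 0

/-- The three vectors `(1,−1,0)`, `(1,0,−1)`, `(0,1,−1)`. -/
def xis : Set (Fin 3 → ℝ) := {![1, -1, 0], ![1, 0, -1], ![0, 1, -1]}

/-- The three vectors `(2,−1,−1)`, `(−1,2,−1)`, `(−1,−1,2)`. -/
def etas : Set (Fin 3 → ℝ) := {![2, -1, -1], ![-1, 2, -1], ![-1, -1, 2]}

/-- The 72 roots of `E6`, modeled in the subspace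
`R = {(x;y;z) : Σxᵢ = Σyⱼ = Σzₖ = 0}` of `ℝ⁹`: the 9 vectors `(ξ;0;0)`, `(0;ξ;0)`,
`(0;0;ξ)` with `ξ ∈ xis`, the 27 vectors `(1/3)(ξ;η;ζ)` with `ξ,η,ζ ∈ etas`, and the
negatives of all of these. -/
def E6roots : Set V9 :=
  {v | ∃ w : V9, (v = w ∨ v = -w) ∧
    ((∃ ξ ∈ xis, w = blk ξ 0 0 ∨ w = blk 0 ξ 0 ∨ w = blk 0 0 ξ) ∨
     (∃ ξ ∈ etas, ∃ η ∈ etas, ∃ ζ ∈ etas, w = ((1 : ℝ) / 3) • blk ξ η ζ))}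

/-- The 36 projective lines of the `E6` configuration. -/
def E6lines : Set (Submodule ℝ V9) := ray9 '' E6roots

/- ================= auxiliary development ================= -/

/-- Index type for the 36 lines. -/
abbrev I6 : Type := (Fin 3 × Fin 3) ⊕ (Fin 3 × Fin 3 × Fin 3)

def xiZ : Fin 3 → Fin 3 → ℤ := ![![1, -1, 0], ![1, 0, -1], ![0, 1, -1]]
def etaZ : Fin 3 → Fin 3 → ℤ := ![![2, -1, -1], ![-1, 2, -1], ![-1, -1, 2]]

def repZ : I6 → Fin 3 → Fin 3 → ℤ
  | Sum.inl (b, k) => fun b' => if b' = b then xiZ k else 0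
  | Sum.inr (i, j, k) => ![etaZ i, etaZ j, etaZ k]

def rep (i : I6) : V9 := fun b p => (repZ i b p : ℝ)

def DZ (i j : I6) : ℤ := ∑ b, ∑ p, repZ i b p * repZ j b p

lemma inj_key : ∀ i j : I6, DZ i j ^ 2 = DZ i i * DZ j j → i = j := by decide

lemma DZ_self : ∀ i : I6, DZ i i ≠ 0 := by decide

lemma card_key : ∀ i : I6, ((Finset.univ.filter fun j => DZ i j = 0)).card = 15 := by decide

lemma dot_rep (i j : I6) : dot9 (rep i) (rep j) = (DZ i j : ℝ) := by
  simp only [dot9, rep, DZ]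
  push_cast
  rfl

lemma dot9_smul_smul (a b : ℝ) (v w : V9) :
    dot9 (a • v) (b • w) = a * b * dot9 v w := by
  simp only [dot9, Finset.mul_sum, Pi.smul_apply, smul_eq_mul]
  exact Finset.sum_congr rfl fun _ _ => Finset.sum_congr rfl fun _ _ => by ring

lemma ray9_smul (c : ℝ) (hc : c ≠ 0) (v : V9) : ray9 (c • v) = ray9 v :=
  Submodule.span_singleton_smul_eq (IsUnit.mk0 c hc) v

lemma ray9_neg (v : V9) : ray9 (-v) = ray9 v := by
  have : -v = (-1 : ℝ) • v := by simp
  rw [this, ray9_smul]; norm_num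

lemma ray_inj : Function.Injective (fun i : I6 => ray9 (rep i)) := by
  intro i j h
  simp only at h
  have hmem : rep i ∈ ray9 (rep j) := by
    rw [← h]; exact Submodule.mem_span_singleton_self _
  obtain ⟨c, hc⟩ := (Submodule.mem_span_singleton).mp hmem
  apply inj_key
  have h1 : dot9 (rep i) (rep j) = c * dot9 (rep j) (rep j) := by
    rw [← hc]
    have := dot9_smul_smul c 1 (rep j) (rep j)
    simpa using this
  have h2 : dot9 (rep i) (rep i) = c * c * dot9 (rep j) (rep j) := by
    rw [← hc, dot9_smul_smul]
  have key : ((DZ i j ^ 2 : ℤ) : ℝ) = ((DZ i i * DZ j j : ℤ) : ℝ) := by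
    push_cast
    rw [← dot_rep, ← dot_rep, ← dot_rep, h1, h2]
    ring
  exact_mod_cast key

/-- Real versions of the ξ vectors. -/
lemma xi_cast (k : Fin 3) :
    (fun p => ((xiZ k p : ℤ) : ℝ)) = ![![1, -1, 0], ![1, 0, -1], ![0, 1, -1]] k := by
  fin_cases k <;> (funext p; fin_cases p <;>
    norm_num [xiZ, Matrix.vecHead, Matrix.vecTail])

lemma eta_cast (k : Fin 3) :
    (fun p => ((etaZ k p : ℤ) : ℝ)) = ![![2, -1, -1], ![-1, 2, -1], ![-1, -1, 2]] k := by
  fin_cases k <;> (funext p; fin_cases p <;>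
    norm_num [etaZ, Matrix.vecHead, Matrix.vecTail])

lemma rep_inl0 (k : Fin 3) :
    rep (Sum.inl (0, k)) = blk (fun p => ((xiZ k p : ℤ) : ℝ)) 0 0 := by
  funext b' p; fin_cases b' <;>
    simp [rep, repZ, blk, Matrix.vecHead, Matrix.vecTail]

lemma rep_inl1 (k : Fin 3) :
    rep (Sum.inl (1, k)) = blk 0 (fun p => ((xiZ k p : ℤ) : ℝ)) 0 := by
  funext b' p; fin_cases b' <;>
    simp [rep, repZ, blk, Matrix.vecHead, Matrix.vecTail]

lemma rep_inl2 (k : Fin 3) :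
    rep (Sum.inl (2, k)) = blk 0 0 (fun p => ((xiZ k p : ℤ) : ℝ)) := by
  funext b' p; fin_cases b' <;>
    simp [rep, repZ, blk, Matrix.vecHead, Matrix.vecTail]

lemma rep_inr (i j k : Fin 3) :
    rep (Sum.inr (i, j, k)) =
      blk (fun p => ((etaZ i p : ℤ) : ℝ)) (fun p => ((etaZ j p : ℤ) : ℝ))
        (fun p => ((etaZ k p : ℤ) : ℝ)) := by
  funext b' p; fin_cases b' <;>
    simp [rep, repZ, blk, Matrix.vecHead, Matrix.vecTail]

lemma E6lines_eq : E6lines = Set.range fun i : I6 => ray9 (rep i) := by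
  ext L
  constructor
  · rintro ⟨v, ⟨w, hv, hw⟩, rfl⟩
    have hray : ray9 v = ray9 w := by
      rcases hv with rfl | rfl
      · rfl
      · exact ray9_neg w
    rw [hray]
    rcases hw with ⟨ξ, hξ, hpos⟩ | ⟨ξ, hξ, η, hη, ζ, hζ, rfl⟩
    · have : ∃ k : Fin 3, ξ = (fun p => ((xiZ k p : ℤ) : ℝ)) := by
        rcases hξ with rfl | rfl | rfl
        · exact ⟨0, (xi_cast 0).symm⟩
        · exact ⟨1, (xi_cast 1).symm⟩
        · exact ⟨2, (xi_cast 2).symm⟩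
      obtain ⟨k, rfl⟩ := this
      rcases hpos with rfl | rfl | rfl
      · exact ⟨Sum.inl (0, k), by show ray9 _ = _; rw [rep_inl0]⟩
      · exact ⟨Sum.inl (1, k), by show ray9 _ = _; rw [rep_inl1]⟩
      · exact ⟨Sum.inl (2, k), by show ray9 _ = _; rw [rep_inl2]⟩
    · have hξ' : ∃ i : Fin 3, ξ = (fun p => ((etaZ i p : ℤ) : ℝ)) := by
        rcases hξ with rfl | rfl | rfl
        · exact ⟨0, (eta_cast 0).symm⟩
        · exact ⟨1, (eta_cast 1).symm⟩
        · exact ⟨2, (eta_cast 2).symm⟩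
      have hη' : ∃ j : Fin 3, η = (fun p => ((etaZ j p : ℤ) : ℝ)) := by
        rcases hη with rfl | rfl | rfl
        · exact ⟨0, (eta_cast 0).symm⟩
        · exact ⟨1, (eta_cast 1).symm⟩
        · exact ⟨2, (eta_cast 2).symm⟩
      have hζ' : ∃ k : Fin 3, ζ = (fun p => ((etaZ k p : ℤ) : ℝ)) := by
        rcases hζ with rfl | rfl | rfl
        · exact ⟨0, (eta_cast 0).symm⟩
        · exact ⟨1, (eta_cast 1).symm⟩
        · exact ⟨2, (eta_cast 2).symm⟩
      obtain ⟨i, rfl⟩ := hξ'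
      obtain ⟨j, rfl⟩ := hη'
      obtain ⟨k, rfl⟩ := hζ'
      refine ⟨Sum.inr (i, j, k), ?_⟩
      show ray9 _ = _
      rw [ray9_smul ((1 : ℝ) / 3) (by norm_num), rep_inr]
  · rintro ⟨i, rfl⟩
    rcases i with ⟨b, k⟩ | ⟨i, j, k⟩
    · refine ⟨rep (Sum.inl (b, k)), ⟨rep (Sum.inl (b, k)), Or.inl rfl, Or.inl ?_⟩, rfl⟩
      refine ⟨(fun p => ((xiZ k p : ℤ) : ℝ)), ?_, ?_⟩
      · rw [xi_cast]
        fin_cases k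
        · exact Or.inl rfl
        · exact Or.inr (Or.inl rfl)
        · exact Or.inr (Or.inr rfl)
      · fin_cases b
        · exact Or.inl (rep_inl0 k)
        · exact Or.inr (Or.inl (rep_inl1 k))
        · exact Or.inr (Or.inr (rep_inl2 k))
    · refine ⟨((1 : ℝ) / 3) • rep (Sum.inr (i, j, k)),
        ⟨((1 : ℝ) / 3) • rep (Sum.inr (i, j, k)), Or.inl rfl, Or.inr ?_⟩,
        ray9_smul _ (by norm_num) _⟩
      refine ⟨(fun p => ((etaZ i p : ℤ) : ℝ)), ?_,
             (fun p => ((etaZ j p : ℤ) : ℝ)), ?_,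
             (fun p => ((etaZ k p : ℤ) : ℝ)), ?_, by rw [rep_inr]⟩
      · rw [eta_cast]; fin_cases i
        · exact Or.inl rfl
        · exact Or.inr (Or.inl rfl)
        · exact Or.inr (Or.inr rfl)
      · rw [eta_cast]; fin_cases j
        · exact Or.inl rfl
        · exact Or.inr (Or.inl rfl)
        · exact Or.inr (Or.inr rfl)
      · rw [eta_cast]; fin_cases k
        · exact Or.inl rfl
        · exact Or.inr (Or.inl rfl)
        · exact Or.inr (Or.inr rfl)

/-- in the `E6` configuration of 36 projective lines, each line is
orthogonal to exactly 15 other lines. -/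
theorem stmt_12 :
    ∀ L ∈ E6lines, {M | M ∈ E6lines ∧ M ≠ L ∧ Perp9 L M}.ncard = 15 := by
  intro L hL
  rw [E6lines_eq] at hL
  obtain ⟨i, rfl⟩ := hL
  have hset : {M | M ∈ E6lines ∧ M ≠ ray9 (rep i) ∧ Perp9 (ray9 (rep i)) M}
      = (fun j : I6 => ray9 (rep j)) '' {j | DZ i j = 0} := by
    ext M
    constructor
    · rintro ⟨hM, _, hperp⟩
      rw [E6lines_eq] at hM
      obtain ⟨j, rfl⟩ := hM
      refine ⟨j, ?_, rfl⟩
      have h0 := hperp (rep i) (Submodule.mem_span_singleton_self _)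
        (rep j) (Submodule.mem_span_singleton_self _)
      rw [dot_rep] at h0
      exact_mod_cast h0
    · rintro ⟨j, hj, rfl⟩
      have hj0 : DZ i j = 0 := hj
      refine ⟨E6lines_eq ▸ Set.mem_range_self j, ?_, ?_⟩
      · intro h
        have hji : j = i := ray_inj h
        rw [hji] at hj0
        exact DZ_self i hj0
      · intro x hx y hy
        obtain ⟨a, rfl⟩ := (Submodule.mem_span_singleton).mp hx
        obtain ⟨c, rfl⟩ := (Submodule.mem_span_singleton).mp hy
        rw [dot9_smul_smul, dot_rep, hj0]
        simp
  rw [hset, Set.ncard_image_of_injective _ ray_inj]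
  have hcoe : {j : I6 | DZ i j = 0} = ↑(Finset.univ.filter fun j => DZ i j = 0) := by
    ext j; simp
  rw [hcoe, Set.ncard_coe_finset, card_key]
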